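/- There do not exist five distinct vertices a, b, c, d, e ∈ V such that φ(be) = φ(cd), φ(ab) = φ(de), and φ(bc) = φ(ae), where φ is the Modified CFLS coloring. -/

import Mathlib

/-!
Let `p` be the first block in which `b` and `e` differ. The first component of `φ(be) = φ(cd)`
says that `c` and `d` also first differ in block `p` and that `{b_p, e_p} = {c_p, d_p}`.
If `b_p = c_p` and `e_p = d_p`, comparing the indices `i_p` in `φ(bc) = φ(ae)` and
`φ(ab) = φ(de)` forces `a_p = e_p` and `a_p = b_p`, which is absurd. If `b_p = d_p` and
`e_p = c_p`, the three strings `a_p, b_p, e_p` pairwise first differ at the same bit, which is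
impossible for only two bit values.
-/

namespace CFLS

/-- A vertex of `K_n` for `n = 2^(m^2)`: `m` blocks, each a string of `m` bits.
`x k` is the `k`-th block `x^(k+1)`, and `x k j` is its `j`-th bit (most significant first). -/
abbrev Vtx (m : ℕ) := Fin m → Fin m → Bool

/-- The `j`-th bit of a bit string (as a total function of `j : ℕ`). -/
def bitAt {N : ℕ} (f : Fin N → Bool) (j : ℕ) : Bool :=
  if h : j < N then f ⟨j, h⟩ else false

/-- The value of a bit string read as a binary integer, most significant bit first. -/
def strToNat {N : ℕ} (f : Fin N → Bool) : ℕ :=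
  ∑ j : Fin N, if f j then 2 ^ (N - 1 - j.val) else 0

/-- The `k`-th block of a vertex (as a total function of `k : ℕ`). -/
def blockAt {m : ℕ} (x : Vtx m) (k : ℕ) : Fin m → Bool :=
  if h : k < m then x ⟨k, h⟩ else fun _ => false

/-- The least block index at which `x` and `y` differ. -/
noncomputable def firstDiffBlock {m : ℕ} (x y : Vtx m) : ℕ :=
  sInf {k | blockAt x k ≠ blockAt y k}

/-- The position (1-indexed) of the first bit at which two bit strings differ; `0` if equal. -/
noncomputable def firstDiffIdx {N : ℕ} (f g : Fin N → Bool) : ℕ :=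
  if f = g then 0 else sInf {j | bitAt f j ≠ bitAt g j} + 1

/-- The value of a vertex read as a binary integer (concatenation of its blocks). -/
def vtxToNat {m : ℕ} (x : Vtx m) : ℕ :=
  ∑ k : Fin m, strToNat (x k) * (2 ^ m) ^ (m - 1 - k.val)

/-- The colors of the Modified CFLS coloring:
`((i, {x^(i), y^(i)}), i_1, …, i_m, δ_1, …, δ_m)`. -/
abbrev Color (m : ℕ) := (ℕ × Set (Fin m → Bool)) × (Fin m → ℕ) × (Fin m → ℤ)

/-- The Modified CFLS color of the edge `xy` assuming `x ≤ y` as binary integers. -/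
noncomputable def phiAux {m : ℕ} (x y : Vtx m) : Color m :=
  ((firstDiffBlock x y,
      {blockAt x (firstDiffBlock x y), blockAt y (firstDiffBlock x y)}),
   fun k => firstDiffIdx (x k) (y k),
   fun k => if strToNat (x k) ≤ strToNat (y k) then (1 : ℤ) else -1)

/-- The Modified CFLS coloring `φ`. -/
noncomputable def phi {m : ℕ} (x y : Vtx m) : Color m :=
  if vtxToNat x ≤ vtxToNat y then phiAux x y else phiAux y x

/-- The ten edges among five vertices. -/
def edgeList {m : ℕ} (a b c d e : Vtx m) : List (Vtx m × Vtx m) :=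
  [(a,b),(a,c),(a,d),(a,e),(b,c),(b,d),(b,e),(c,d),(c,e),(d,e)]

/-- The number of the ten edges among `a,b,c,d,e` receiving color `col` under `φ`. -/
noncomputable def colorCount {m : ℕ} (a b c d e : Vtx m) (col : Color m) : ℕ :=
  ((edgeList a b c d e).map fun p => phi p.1 p.2).countP fun x =>
    @decide (x = col) (Classical.propDecidable _)

/-- Five pairwise distinct vertices. -/
def Distinct5 {m : ℕ} (a b c d e : Vtx m) : Prop :=
  a ≠ b ∧ a ≠ c ∧ a ≠ d ∧ a ≠ e ∧ b ≠ c ∧ b ≠ d ∧ b ≠ e ∧ c ≠ d ∧ c ≠ e ∧ d ≠ e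

/-- `col` appears on some edge among `a,b,c,d,e`. -/
noncomputable def IsAttained {m : ℕ} (a b c d e : Vtx m) (col : Color m) : Prop :=
  colorCount a b c d e col ≠ 0

/-- A 2-2-2-2-2 configuration: five distinct vertices such that `φ` on the ten edges
among them takes exactly five values, each attained on exactly two edges. -/
def IsConfig22222 {m : ℕ} (a b c d e : Vtx m) : Prop :=
  Distinct5 a b c d e ∧
  ∀ col : Color m, colorCount a b c d e col = 0 ∨ colorCount a b c d e col = 2

/-- The color class of `col` is a matching: two vertex-disjoint edges of color `col`. -/
def IsMatchingClass {m : ℕ} (a b c d e : Vtx m) (col : Color m) : Prop :=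
  ∃ p ∈ edgeList a b c d e, ∃ q ∈ edgeList a b c d e,
    phi p.1 p.2 = col ∧ phi q.1 q.2 = col ∧
    p.1 ≠ q.1 ∧ p.1 ≠ q.2 ∧ p.2 ≠ q.1 ∧ p.2 ≠ q.2

/-- The color class of `col` is a path: two distinct edges of color `col` sharing a vertex. -/
def IsPathClass {m : ℕ} (a b c d e : Vtx m) (col : Color m) : Prop :=
  ∃ p ∈ edgeList a b c d e, ∃ q ∈ edgeList a b c d e,
    p ≠ q ∧ phi p.1 p.2 = col ∧ phi q.1 q.2 = col ∧
    (p.1 = q.1 ∨ p.1 = q.2 ∨ p.2 = q.1 ∨ p.2 = q.2)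

section BitStrings

variable {N : ℕ}

lemma firstDiffIdx_comm (f g : Fin N → Bool) : firstDiffIdx f g = firstDiffIdx g f := by
  unfold firstDiffIdx
  simp only [eq_comm (a := f), ne_comm (a := bitAt f _)]

@[simp]
lemma firstDiffIdx_self (f : Fin N → Bool) : firstDiffIdx f f = 0 := if_pos rfl

lemma firstDiffIdx_eq_zero_iff {f g : Fin N → Bool} : firstDiffIdx f g = 0 ↔ f = g := by
  unfold firstDiffIdx
  split_ifs with h <;> simp [h]

lemma bitAt_ne_of_firstDiffIdx_eq_succ {f g : Fin N → Bool} {j : ℕ}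
    (h : firstDiffIdx f g = j + 1) : bitAt f j ≠ bitAt g j := by
  unfold firstDiffIdx at h
  split_ifs at h with hfg
  obtain ⟨i, hi⟩ := Function.ne_iff.mp hfg
  have hne : {j | bitAt f j ≠ bitAt g j}.Nonempty := ⟨i, by simpa [bitAt] using hi⟩
  simpa [Nat.succ_injective h] using Nat.sInf_mem hne

lemma firstDiffIdx_ne_of_eq {A B E : Fin N → Bool} (hBE : B ≠ E)
    (hAB : firstDiffIdx A B = firstDiffIdx B E) : firstDiffIdx A E ≠ firstDiffIdx B E := by
  intro hAE
  obtain ⟨j, hj⟩ := Nat.exists_eq_succ_of_ne_zero (mt firstDiffIdx_eq_zero_iff.mp hBE)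
  have h₁ := bitAt_ne_of_firstDiffIdx_eq_succ (hAB.trans hj)
  have h₂ := bitAt_ne_of_firstDiffIdx_eq_succ (hAE.trans hj)
  have h₃ := bitAt_ne_of_firstDiffIdx_eq_succ hj
  revert h₁ h₂ h₃
  cases bitAt A j <;> cases bitAt B j <;> cases bitAt E j <;> decide

lemma not_candy_corn_bitStrings {A B C D E : Fin N → Bool} (hBE : B ≠ E)
    (hpair : ({B, E} : Set (Fin N → Bool)) = {C, D})
    (hAB : firstDiffIdx A B = firstDiffIdx D E) (hBC : firstDiffIdx B C = firstDiffIdx A E) :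
    False := by
  rcases Set.pair_eq_pair_iff.mp hpair with ⟨rfl, rfl⟩ | ⟨rfl, rfl⟩
  · have hA_B := firstDiffIdx_eq_zero_iff.mp (hAB.trans (firstDiffIdx_self E))
    have hA_E := firstDiffIdx_eq_zero_iff.mp (hBC.symm.trans (firstDiffIdx_self B))
    exact hBE (hA_B.symm.trans hA_E)
  · exact firstDiffIdx_ne_of_eq hBE hAB hBC.symm

end BitStrings

section Coloring

variable {m : ℕ}

lemma firstDiffBlock_comm (x y : Vtx m) : firstDiffBlock x y = firstDiffBlock y x := by
  simp only [firstDiffBlock, ne_comm]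

lemma blockAt_firstDiffBlock_ne {x y : Vtx m} (h : x ≠ y) :
    blockAt x (firstDiffBlock x y) ≠ blockAt y (firstDiffBlock x y) := by
  obtain ⟨k, hk⟩ := Function.ne_iff.mp h
  exact Nat.sInf_mem (s := {k | blockAt x k ≠ blockAt y k}) ⟨k, by simpa [blockAt] using hk⟩

lemma firstDiffBlock_lt {x y : Vtx m} (h : x ≠ y) : firstDiffBlock x y < m := by
  by_contra hge
  exact blockAt_firstDiffBlock_ne h (by simp [blockAt, hge])

lemma phi_fst (x y : Vtx m) :
    (phi x y).1 = (firstDiffBlock x y,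
      {blockAt x (firstDiffBlock x y), blockAt y (firstDiffBlock x y)}) := by
  unfold phi phiAux
  split_ifs
  · rfl
  · rw [firstDiffBlock_comm, Set.pair_comm]

@[simp]
lemma phi_snd_fst (x y : Vtx m) (k : Fin m) :
    (phi x y).2.1 k = firstDiffIdx (x k) (y k) := by
  unfold phi phiAux
  split_ifs
  · rfl
  · exact firstDiffIdx_comm _ _

lemma exists_block_pair_eq_of_phi_eq {x y z w : Vtx m} (hxy : x ≠ y)
    (h : phi x y = phi z w) :
    ∃ P : Fin m, x P ≠ y P ∧ ({x P, y P} : Set (Fin m → Bool)) = {z P, w P} := by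
  have hfst := congrArg Prod.fst h
  rw [phi_fst, phi_fst, Prod.mk.injEq] at hfst
  obtain ⟨hblock, hpair⟩ := hfst
  have hlt := firstDiffBlock_lt hxy
  have hne := blockAt_firstDiffBlock_ne hxy
  rw [← hblock] at hpair
  exact ⟨⟨_, hlt⟩, by simpa [blockAt, hlt] using hne, by simpa [blockAt, hlt] using hpair⟩

end Coloring

theorem no_candy_corn_general (m : ℕ) :
    ¬ ∃ a b c d e : Vtx m, Distinct5 a b c d e ∧
      phi b e = phi c d ∧ phi a b = phi d e ∧ phi b c = phi a e := by
  rintro ⟨a, b, c, d, e, hd, hbe_cd, hab_de, hbc_ae⟩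
  obtain ⟨P, hne, hpair⟩ := exists_block_pair_eq_of_phi_eq hd.2.2.2.2.2.2.1 hbe_cd
  exact not_candy_corn_bitStrings hne hpair
    (by simpa using congrArg (·.2.1 P) hab_de) (by simpa using congrArg (·.2.1 P) hbc_ae)

/-- The configuration of Figure (A) is forbidden under the Modified CFLS coloring. -/
theorem no_candy_corn (m : ℕ) (hm : 0 < m) :
    ¬ ∃ a b c d e : Vtx m, Distinct5 a b c d e ∧
      phi b e = phi c d ∧ phi a b = phi d e ∧ phi b c = phi a e :=
  no_candy_corn_general m

end CFLS
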